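/- Let x be an irrational real number. With C_sup(x) = limsup_{L→∞} (1/L) Σ_{l=1}^{L} (−log{lx} − log{−lx}) and B_sup(x) the exponential type of x, one has C_sup(x) ≤ 4 + 4·B_sup(x). In particular, C_sup(x) is finite whenever B_sup(x) is finite. -/

import Mathlib

/-!
Write `‖y‖` for `distZ y`. Each summand is `-log (f (1 - f))` with `f = {l x}`, which is at most
`log 2 + log ‖l x‖⁻¹`. Fix `L`, let `m ≤ L` be the first minimiser of `‖k x‖` on `[1, L]` and
`q < m` a minimiser on `[1, m)`. The integer `m round (q x) - q round (m x)` is nonzero, which gives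
`δ := ‖q x‖ ≥ 1 / (2 m)`. The points `l x` with `l` in one block of `m` consecutive integers are
`δ`-separated modulo `1`, so at most `L / m + 1 + 8 s L` of the `‖l x‖` lie below `s`, and none
lies below `‖m x‖`. Integrating this count against `ds / s` (layer cake) yields
`∑ log ‖l x‖⁻¹ ≤ (1 + 3 log 2) L + (L / m + 1) log ‖m x‖⁻¹`. As `L → ∞` also `m → ∞`, so eventually
`log ‖m x‖⁻¹ ≤ (B_sup + ε) m`, whence `C_sup ≤ 1 + 4 log 2 + 2 B_sup ≤ 4 + 4 B_sup`.
-/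

open Filter
open scoped ENNReal

/-- Distance from a real number to the nearest integer. -/
noncomputable def distZ (y : ℝ) : ℝ := |y - round y|

/-- The exponential type of `x`: `limsup_{q→∞} log(1/dist(qx,ℤ))/q`, valued in `[0,∞]`. -/
noncomputable def Bsup (x : ℝ) : ℝ≥0∞ :=
  Filter.limsup (fun q : ℕ => ENNReal.ofReal (Real.log (distZ ((q : ℝ) * x))⁻¹ / (q : ℝ)))
    Filter.atTop

/-- `C_sup(x) = limsup_{L→∞} (1/L) Σ_{l=1}^L (-log{lx} - log{-lx})`, valued in `[0,∞]`. -/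
noncomputable def Csup (x : ℝ) : ℝ≥0∞ :=
  Filter.limsup (fun L : ℕ => ENNReal.ofReal ((1 / (L : ℝ)) *
    ∑ l ∈ Finset.Icc 1 L,
      (-Real.log (Int.fract ((l : ℝ) * x)) - Real.log (Int.fract (-((l : ℝ) * x))))))
    Filter.atTop

open Finset MeasureTheory

theorem Finset.exists_min_image_lt_of_lt {α β : Type*} [LinearOrder α] [LinearOrder β]
    (s : Finset α) (f : α → β) (hs : s.Nonempty) :
    ∃ m ∈ s, (∀ k ∈ s, f m ≤ f k) ∧ ∀ k ∈ s, k < m → f m < f k := by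
  obtain ⟨m, hm, hmin⟩ := s.exists_min_image (fun k => toLex (f k, k)) hs
  refine ⟨m, hm, fun k hk => ?_, fun k hk hkm => ?_⟩
  · rcases Prod.Lex.le_iff.1 (hmin k hk) with h | h
    exacts [h.le, h.1.le]
  · rcases Prod.Lex.le_iff.1 (hmin k hk) with h | h
    exacts [h, absurd h.2 (not_le.2 hkm)]

theorem card_le_mul_of_separated {T : Finset ℕ} {θ : ℕ → ℝ} {L m : ℕ} {a ℓ δ : ℝ}
    (hm : 0 < m) (hδ : 0 < δ) (hT : ∀ l ∈ T, l ≤ L ∧ θ l ∈ Set.Icc a (a + ℓ))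
    (hsep : ∀ l ∈ T, ∀ l' ∈ T, l < l' → l' < l + m → δ ≤ |θ l' - θ l|) :
    #T ≤ (L / m + 1) * (⌊ℓ / δ⌋₊ + 1) := by
  let bucket : ℕ → ℕ × ℕ := fun l => (l / m, ⌊(θ l - a) / δ⌋₊)
  have hbucket : ∀ l ∈ T, ∀ l' ∈ T, l < l' → bucket l ≠ bucket l' := by
    intro l hl l' hl' hll' heq
    obtain ⟨hblock, hfloor⟩ : l / m = l' / m ∧ ⌊(θ l - a) / δ⌋₊ = ⌊(θ l' - a) / δ⌋₊ :=
      Prod.ext_iff.1 heq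
    have hnear : l' < l + m := by
      calc l' < l' / m * m + m := Nat.lt_div_mul_add hm
        _ = l / m * m + m := by rw [← hblock]
        _ ≤ l + m := by gcongr; exact Nat.div_mul_le_self l m
    have h0 : ∀ k ∈ T, 0 ≤ (θ k - a) / δ := fun k hk =>
      div_nonneg (sub_nonneg.2 (hT k hk).2.1) hδ.le
    have hclose : |(θ l' - a) / δ - (θ l - a) / δ| < 1 := by
      have hu := Nat.floor_le (h0 l hl)
      have hu' := Nat.lt_floor_add_one ((θ l - a) / δ)
      have hv := Nat.floor_le (h0 l' hl')
      have hv' := Nat.lt_floor_add_one ((θ l' - a) / δ)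
      rw [hfloor] at hu hu'
      rw [abs_lt]; constructor <;> linarith
    rw [← sub_div, sub_sub_sub_cancel_right, abs_div, abs_of_pos hδ, div_lt_one hδ] at hclose
    exact (hsep l hl l' hl' hll' hnear).not_gt hclose
  calc #T ≤ #(range (L / m + 1) ×ˢ range (⌊ℓ / δ⌋₊ + 1)) := by
        refine card_le_card_of_injOn bucket (fun l hl => ?_) (fun l hl l' hl' heq => ?_)
        · obtain ⟨hlL, hθa, hθb⟩ := hT l hl
          simp only [coe_product, coe_range, Set.mem_prod, Set.mem_Iio, Nat.lt_succ_iff, bucket]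
          exact ⟨Nat.div_le_div_right hlL, Nat.floor_le_floor (by gcongr; linarith)⟩
        · by_contra hne
          rcases lt_or_gt_of_ne hne with h | h
          exacts [hbucket l hl l' hl' h heq, hbucket l' hl' l hl h heq.symm]
    _ = (L / m + 1) * (⌊ℓ / δ⌋₊ + 1) := by simp

theorem sum_integral_eq_integral_card {ι : Type*} (T : Finset ι) {d : ι → ℝ} {a b : ℝ}
    {w : ℝ → ℝ} (hab : a ≤ b) (hw : IntegrableOn w (Set.Ioc a b))
    (hd : ∀ i ∈ T, d i ∈ Set.Icc a b) :
    ∑ i ∈ T, ∫ s in d i..b, w s = ∫ s in a..b, (#{i ∈ T | d i < s} : ℝ) * w s := by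
  have hind : ∀ i ∈ T, ∫ s in d i..b, w s = ∫ s in a..b, (Set.Ioi (d i)).indicator w s := by
    intro i hi
    rw [intervalIntegral.integral_of_le (hd i hi).2, intervalIntegral.integral_of_le hab,
      setIntegral_indicator measurableSet_Ioi, Set.Ioc_inter_Ioi, max_eq_right (hd i hi).1]
  rw [sum_congr rfl hind, ← intervalIntegral.integral_finsetSum fun i _ =>
    (intervalIntegrable_iff_integrableOn_Ioc_of_le hab).2 (hw.indicator measurableSet_Ioi)]
  congr 1 with s
  simp only [Set.indicator_apply, Set.mem_Ioi]
  rw [sum_ite, sum_const_zero, sum_const, nsmul_eq_mul, add_zero]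

theorem integral_min_inv_le {t b K : ℝ} (ht : 0 < t) (htb : t ≤ b) (hbK : 1 ≤ b * K) :
    ∫ s in t..b, min s⁻¹ K ≤ 1 + Real.log (b * K) := by
  have hb : 0 < b := ht.trans_le htb
  have hK : 0 < K := pos_of_mul_pos_right (one_pos.trans_le hbK) hb.le
  set c := max t K⁻¹
  have htc : t ≤ c := le_max_left _ _
  have hcb : c ≤ b := max_le htb ((inv_le_iff_one_le_mul₀ hK).2 (by linarith))
  have hc : 0 < c := ht.trans_le htc
  have hcont : ContinuousOn (fun s : ℝ => min s⁻¹ K) (Set.Icc t b) :=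
    (continuousOn_inv₀.mono fun s hs => (ht.trans_le hs.1).ne').inf continuousOn_const
  have hint : ∀ {u v}, t ≤ u → u ≤ v → v ≤ b →
      IntervalIntegrable (fun s : ℝ => min s⁻¹ K) volume u v :=
    fun hu huv hv => (hcont.mono (Set.Icc_subset_Icc hu hv)).intervalIntegrable_of_Icc huv
  rw [← intervalIntegral.integral_add_adjacent_intervals (hint le_rfl htc hcb)
    (hint htc hcb le_rfl)]
  have hlow : ∫ s in t..c, min s⁻¹ K ≤ 1 :=
    calc ∫ s in t..c, min s⁻¹ K ≤ ∫ s in t..c, K :=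
          intervalIntegral.integral_mono_on htc (hint le_rfl htc hcb) intervalIntegrable_const
            fun s _ => min_le_right _ _
      _ ≤ 1 := by
        rw [intervalIntegral.integral_const, smul_eq_mul]
        rcases max_cases t K⁻¹ with ⟨h, _⟩ | ⟨h, hlt⟩
        · simp [c, h]
        · rw [show c = K⁻¹ from h, sub_mul, inv_mul_cancel₀ hK.ne']
          nlinarith
  have hhigh : ∫ s in c..b, min s⁻¹ K ≤ Real.log (b * K) :=
    calc ∫ s in c..b, min s⁻¹ K ≤ ∫ s in c..b, s⁻¹ :=
          intervalIntegral.integral_mono_on hcb (hint htc hcb le_rfl)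
            (intervalIntegral.intervalIntegrable_inv
              (fun s hs => (hc.trans_le (Set.uIcc_of_le hcb ▸ hs).1).ne') continuousOn_id)
            fun s _ => min_le_left _ _
      _ = Real.log (b / c) := integral_inv_of_pos hc hb
      _ ≤ Real.log (b * K) := by
        refine Real.log_le_log (by positivity) ?_
        rw [div_eq_mul_inv]
        gcongr
        exact inv_le_of_inv_le₀ hK (le_max_right _ _)
  linarith

theorem sum_log_inv_le_of_card_lt_le {ι : Type*} {T : Finset ι} {d : ι → ℝ} {t b A K : ℝ}
    (ht : 0 < t) (htb : t ≤ b) (hbK : 1 ≤ b * K) (hd : ∀ i ∈ T, d i ∈ Set.Icc t b)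
    (hN : ∀ s ∈ Set.Icc t b, (#{i ∈ T | d i < s} : ℝ) ≤ A + #T * min 1 (K * s)) :
    ∑ i ∈ T, Real.log (d i)⁻¹ ≤ (1 + Real.log K) * #T + A * Real.log (b / t) := by
  have hb : 0 < b := ht.trans_le htb
  have hK : 0 < K := pos_of_mul_pos_right (one_pos.trans_le hbK) hb.le
  have hinv : ContinuousOn (fun s : ℝ => s⁻¹) (Set.uIcc t b) :=
    continuousOn_inv₀.mono fun s hs => (ht.trans_le (Set.uIcc_of_le htb ▸ hs).1).ne'
  have hmin : ContinuousOn (fun s : ℝ => min s⁻¹ K) (Set.uIcc t b) :=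
    hinv.inf continuousOn_const
  have hlog : ∀ i ∈ T, Real.log (d i)⁻¹ = Real.log b⁻¹ + ∫ s in d i..b, s⁻¹ := by
    intro i hi
    have hdi : 0 < d i := ht.trans_le (hd i hi).1
    rw [integral_inv_of_pos hdi hb, Real.log_div hb.ne' hdi.ne', Real.log_inv, Real.log_inv]
    ring
  have hcount : Monotone fun s => (#{i ∈ T | d i < s} : ℝ) := fun s s' hss' =>
    Nat.cast_le.2 (card_le_card (monotone_filter_right T fun _ _ h => h.trans_le hss'))
  have hpoint : ∀ s ∈ Set.Icc t b,
      (#{i ∈ T | d i < s} : ℝ) * s⁻¹ ≤ A * s⁻¹ + #T * min s⁻¹ K := by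
    intro s hs
    have hs0 : 0 < s := ht.trans_le hs.1
    calc (#{i ∈ T | d i < s} : ℝ) * s⁻¹ ≤ (A + #T * min 1 (K * s)) * s⁻¹ := by
          gcongr; exact hN s hs
      _ = A * s⁻¹ + #T * min s⁻¹ K := by
          rw [add_mul, mul_assoc, min_mul_of_nonneg _ _ (inv_nonneg.2 hs0.le), one_mul,
            mul_inv_cancel_right₀ hs0.ne']
  calc ∑ i ∈ T, Real.log (d i)⁻¹
      = #T * Real.log b⁻¹ + ∫ s in t..b, (#{i ∈ T | d i < s} : ℝ) * s⁻¹ := by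
        rw [sum_congr rfl hlog, sum_add_distrib, sum_const, nsmul_eq_mul,
          sum_integral_eq_integral_card T htb hinv.intervalIntegrable.1 hd]
    _ ≤ #T * Real.log b⁻¹ + ∫ s in t..b, (A * s⁻¹ + #T * min s⁻¹ K) := by
        gcongr
        exact intervalIntegral.integral_mono_on htb
          (hcount.intervalIntegrable.mul_continuousOn hinv)
          ((hinv.intervalIntegrable.const_mul A).add (hmin.intervalIntegrable.const_mul _)) hpoint
    _ = #T * Real.log b⁻¹ + A * Real.log (b / t) + #T * ∫ s in t..b, min s⁻¹ K := by
        rw [intervalIntegral.integral_add (hinv.intervalIntegrable.const_mul A)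
          (hmin.intervalIntegrable.const_mul _), intervalIntegral.integral_const_mul,
          intervalIntegral.integral_const_mul, integral_inv_of_pos ht hb, add_assoc]
    _ ≤ #T * Real.log b⁻¹ + A * Real.log (b / t) + #T * (1 + Real.log (b * K)) := by
        gcongr
        exact integral_min_inv_le ht htb hbK
    _ = (1 + Real.log K) * #T + A * Real.log (b / t) := by
        rw [Real.log_mul hb.ne' hK.ne', Real.log_inv]; ring

theorem distZ_nonneg (y : ℝ) : 0 ≤ distZ y := abs_nonneg _

theorem distZ_le_half (y : ℝ) : distZ y ≤ 1 / 2 := abs_sub_round y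

theorem distZ_pos {y : ℝ} (hy : Irrational y) : 0 < distZ y :=
  abs_pos.2 (sub_ne_zero.2 (hy.ne_int _))

theorem distZ_sub_le (y z : ℝ) : distZ (y - z) ≤ |(y - round y) - (z - round z)| := by
  have := round_le (y - z) (round y - round z)
  rwa [Int.cast_sub, sub_sub_sub_comm] at this

theorem neg_log_fract_sub_log_fract_neg_le {y : ℝ} (hy : 0 < distZ y) :
    -Real.log (Int.fract y) - Real.log (Int.fract (-y)) ≤ Real.log 2 + Real.log (distZ y)⁻¹ := by
  set d := distZ y
  set f := Int.fract y
  have hdf : d ≤ f := by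
    have := round_le y ⌊y⌋
    rwa [Int.self_sub_floor, abs_of_nonneg (Int.fract_nonneg y)] at this
  have hdf' : d ≤ 1 - f := by
    have := round_le y (⌊y⌋ + 1)
    rwa [Int.cast_add, Int.cast_one, ← sub_sub, Int.self_sub_floor,
      abs_of_nonpos (a := Int.fract y - 1) (by linarith [Int.fract_lt_one y]), neg_sub] at this
  have hf : 0 < f := hy.trans_le hdf
  have hf' : 0 < 1 - f := hy.trans_le hdf'
  have hprod : d / 2 ≤ f * (1 - f) := by
    rcases le_total f (1 / 2) with h | h <;> nlinarith
  have := Real.log_le_log (by positivity) hprod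
  rw [Real.log_div hy.ne' two_ne_zero, Real.log_mul hf.ne' hf'.ne'] at this
  rw [Int.fract_neg hf.ne', Real.log_inv]
  linarith

theorem one_le_two_mul_mul_distZ {x : ℝ} {q m : ℕ} (hqm : q ≤ m)
    (h : distZ (m * x) < distZ (q * x)) : 1 ≤ 2 * m * distZ (q * x) := by
  have hq : 0 < q := Nat.pos_of_ne_zero fun hq =>
    (distZ_nonneg (m * x)).not_gt (by simpa [hq, distZ] using h)
  set θq := (q : ℝ) * x - round ((q : ℝ) * x)
  set θm := (m : ℝ) * x - round ((m : ℝ) * x)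
  -- `D ≠ 0` because `m` approximates `x` strictly better than `q ≤ m`
  set D : ℤ := m * round ((q : ℝ) * x) - q * round ((m : ℝ) * x)
  have hD : (D : ℝ) = q * θm - m * θq := by simp only [D, θq, θm]; push_cast; ring
  have hlt : q * distZ (m * x) < m * distZ (q * x) :=
    calc (q : ℝ) * distZ (m * x) < q * distZ (q * x) := by gcongr
      _ ≤ m * distZ (q * x) := by gcongr; exact distZ_nonneg _
  have hD0 : D ≠ 0 := by
    rintro hD0
    rw [hD0, Int.cast_zero, eq_comm, sub_eq_zero] at hD
    have := congrArg abs hD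
    simp only [abs_mul, Nat.abs_cast] at this
    exact hlt.ne this
  calc (1 : ℝ) ≤ |(D : ℝ)| := by exact_mod_cast Int.one_le_abs hD0
    _ ≤ q * distZ (m * x) + m * distZ (q * x) := by
      rw [hD]
      refine (abs_sub _ _).trans (le_of_eq ?_)
      simp only [abs_mul, Nat.abs_cast, distZ, θq, θm]
    _ ≤ 2 * m * distZ (q * x) := by linarith

theorem exists_distZ_le_one_div (x : ℝ) {L : ℕ} (hL : 0 < L) :
    ∃ k ∈ Icc 1 L, distZ (k * x) ≤ 1 / (L + 1) := by
  obtain ⟨j, k, hk0, hkL, hk⟩ := Real.exists_int_int_abs_mul_sub_le x hL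
  refine ⟨k.toNat, mem_Icc.2 ⟨by omega, by omega⟩, ?_⟩
  rw [show ((k.toNat : ℕ) : ℝ) = k by exact_mod_cast Int.toNat_of_nonneg hk0.le]
  exact (round_le _ j).trans hk

def IsBestApprox (x : ℝ) (m : ℕ) : Prop :=
  ∀ k ∈ Ico 1 m, distZ (m * x) < distZ (k * x)

theorem IsBestApprox.exists_separation {x : ℝ} {m : ℕ} (hbest : IsBestApprox x m)
    (hm : 1 < m) :
    ∃ δ : ℝ, 1 ≤ 2 * m * δ ∧ ∀ k ∈ Ico 1 m, δ ≤ distZ (k * x) := by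
  obtain ⟨q, hq, hqmin⟩ := (Ico 1 m).exists_min_image (fun k => distZ (k * x))
    ⟨1, mem_Ico.2 ⟨le_rfl, hm⟩⟩
  exact ⟨_, one_le_two_mul_mul_distZ (mem_Ico.1 hq).2.le (hbest q hq), hqmin⟩

theorem eventually_exists_bestApprox {x : ℝ} (hx : Irrational x) (Q : ℕ) :
    ∀ᶠ L in atTop, ∃ m ∈ Icc 1 L, Q < m ∧ (∀ k ∈ Icc 1 L, distZ (m * x) ≤ distZ (k * x)) ∧
      IsBestApprox x m := by
  have hsmall : ∀ᶠ L : ℕ in atTop, ∀ k ∈ Icc 1 Q, 1 / ((L : ℝ) + 1) < distZ (k * x) :=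
    (eventually_all_finset _).2 fun k hk => tendsto_one_div_add_atTop_nhds_zero_nat.eventually
      (gt_mem_nhds (distZ_pos (hx.natCast_mul (by simp at hk; omega))))
  filter_upwards [eventually_gt_atTop 0, hsmall] with L hL hLQ
  obtain ⟨m, hm, hmin, hfirst⟩ := (Icc 1 L).exists_min_image_lt_of_lt (fun k => distZ (k * x))
    ⟨1, mem_Icc.2 ⟨le_rfl, hL⟩⟩
  refine ⟨m, hm, ?_, hmin, fun k hk => ?_⟩
  · obtain ⟨k, hk, hkd⟩ := exists_distZ_le_one_div x hL
    by_contra hmQ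
    have := hLQ m (mem_Icc.2 ⟨(mem_Icc.1 hm).1, not_lt.1 hmQ⟩)
    linarith [hmin k hk]
  · have hk := mem_Ico.1 hk
    exact hfirst k (mem_Icc.2 ⟨hk.1, by linarith [(mem_Icc.1 hm).2]⟩) hk.2

theorem card_distZ_lt_le {x : ℝ} {L m : ℕ} {δ s : ℝ} (hmL : m ≤ L) (hδ : 1 ≤ 2 * m * δ)
    (hsep : ∀ k ∈ Ico 1 m, δ ≤ distZ (k * x)) (hs : 0 ≤ s) :
    (#{l ∈ Icc 1 L | distZ ((l : ℕ) * x) < s} : ℝ) ≤ L / m + 1 + L * min 1 (8 * s) := by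
  have hm : 0 < m := Nat.pos_of_ne_zero (by rintro rfl; simp at hδ; linarith)
  have hm' : (0 : ℝ) < m := Nat.cast_pos.2 hm
  have hδ0 : 0 < δ := pos_of_mul_pos_right (one_pos.trans_le hδ) (by positivity)
  have hmL' : (m : ℝ) ≤ L := Nat.cast_le.2 hmL
  have hle_L : (#{l ∈ Icc 1 L | distZ ((l : ℕ) * x) < s} : ℝ) ≤ L := by
    exact_mod_cast (card_filter_le _ _).trans (by simp)
  have hle_blocks :
      #{l ∈ Icc 1 L | distZ ((l : ℕ) * x) < s} ≤ (L / m + 1) * (⌊2 * s / δ⌋₊ + 1) := by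
    refine card_le_mul_of_separated (θ := fun l => l * x - round (l * x)) (a := -s) hm hδ0
      (fun l hl => ?_) (fun l hl l' hl' hll' hnear => ?_)
    · simp only [mem_filter, mem_Icc] at hl
      have := abs_lt.1 hl.2
      exact ⟨hl.1.2, by constructor <;> linarith⟩
    · have hk : l' - l ∈ Ico 1 m := mem_Ico.2 ⟨by omega, by omega⟩
      have := distZ_sub_le (l' * x) (l * x)
      rw [← sub_mul, ← Nat.cast_sub hll'.le] at this
      exact (hsep _ hk).trans this
  have hfloor : (⌊2 * s / δ⌋₊ : ℝ) ≤ 4 * s * m := by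
    refine (Nat.floor_le (by positivity)).trans ?_
    rw [div_le_iff₀ hδ0]
    nlinarith
  have hle_sL : (#{l ∈ Icc 1 L | distZ ((l : ℕ) * x) < s} : ℝ) ≤ L / m + 1 + L * (8 * s) :=
    calc (#{l ∈ Icc 1 L | distZ ((l : ℕ) * x) < s} : ℝ)
        ≤ ((L / m : ℕ) + 1) * (⌊2 * s / δ⌋₊ + 1) := by exact_mod_cast hle_blocks
      _ ≤ (L / m + 1) * (⌊2 * s / δ⌋₊ + 1) := by gcongr; exact Nat.cast_div_le
      _ = L / m * ⌊2 * s / δ⌋₊ + ⌊2 * s / δ⌋₊ + (L / m + 1) := by ring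
      _ ≤ L / m * (4 * s * m) + 4 * s * L + (L / m + 1) := by
        gcongr; exact hfloor.trans (by gcongr)
      _ = L / m + 1 + L * (8 * s) := by field_simp; ring
  rcases le_total 1 (8 * s) with h | h
  · rw [min_eq_left h]; linarith [div_nonneg (Nat.cast_nonneg L) hm'.le]
  · rwa [min_eq_right h]

theorem sum_neg_log_fract_le {x : ℝ} (hx : Irrational x) {L m : ℕ} {δ : ℝ} (hmL : m ≤ L)
    (hmin : ∀ l ∈ Icc 1 L, distZ (m * x) ≤ distZ (l * x)) (hδ : 1 ≤ 2 * m * δ)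
    (hsep : ∀ k ∈ Ico 1 m, δ ≤ distZ (k * x)) :
    ∑ l ∈ Icc 1 L, (-Real.log (Int.fract ((l : ℝ) * x)) - Real.log (Int.fract (-((l : ℝ) * x))))
      ≤ (1 + 4 * Real.log 2) * L + (L / m + 1) * Real.log (distZ (m * x))⁻¹ := by
  have hm : m ≠ 0 := by rintro rfl; simp at hδ; linarith
  set t := distZ (m * x)
  have ht : 0 < t := distZ_pos (hx.natCast_mul hm)
  have hd : ∀ l ∈ Icc 1 L, distZ (l * x) ∈ Set.Icc t (1 / 2) :=
    fun l hl => ⟨hmin l hl, distZ_le_half _⟩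
  have hlog : ∑ l ∈ Icc 1 L, Real.log (distZ (l * x))⁻¹
      ≤ (1 + Real.log 8) * L + (L / m + 1) * Real.log (1 / 2 / t) := by
    have hcard : (#(Icc 1 L) : ℝ) = L := by simp
    have := sum_log_inv_le_of_card_lt_le (K := 8) (A := L / m + 1) ht
      ((hd m (mem_Icc.2 ⟨Nat.one_le_iff_ne_zero.2 hm, hmL⟩)).2) (by norm_num) hd
      fun s hs => hcard ▸ card_distZ_lt_le hmL hδ hsep (ht.le.trans hs.1)
    rwa [hcard] at this
  have hlog8 : Real.log 8 = 3 * Real.log 2 := by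
    rw [show (8 : ℝ) = 2 ^ 3 by norm_num, Real.log_pow]; norm_num
  have hhalf : Real.log (1 / 2 / t) ≤ Real.log t⁻¹ :=
    Real.log_le_log (by positivity) (by rw [div_div, one_div]; gcongr; linarith)
  have hA : 0 ≤ (L : ℝ) / m + 1 := by positivity
  calc _ ≤ ∑ l ∈ Icc 1 L, (Real.log 2 + Real.log (distZ (l * x))⁻¹) :=
        sum_le_sum fun l hl => neg_log_fract_sub_log_fract_neg_le (ht.trans_le (hmin l hl))
    _ = L * Real.log 2 + ∑ l ∈ Icc 1 L, Real.log (distZ (l * x))⁻¹ := by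
        rw [sum_add_distrib, sum_const, Nat.card_Icc, add_tsub_cancel_right, nsmul_eq_mul]
    _ ≤ (1 + 4 * Real.log 2) * L + (L / m + 1) * Real.log t⁻¹ := by
        nlinarith [mul_le_mul_of_nonneg_left hhalf hA]

theorem eventually_mean_neg_log_fract_le {x : ℝ} (hx : Irrational x) {c : ℝ} (hc0 : 0 ≤ c)
    (hc : ∀ᶠ q : ℕ in atTop, Real.log (distZ (q * x))⁻¹ / q ≤ c) :
    ∀ᶠ L : ℕ in atTop, (1 / (L : ℝ)) * ∑ l ∈ Icc 1 L,
        (-Real.log (Int.fract ((l : ℝ) * x)) - Real.log (Int.fract (-((l : ℝ) * x))))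
      ≤ 1 + 4 * Real.log 2 + 2 * c := by
  obtain ⟨Q, hQ⟩ := eventually_atTop.1 hc
  filter_upwards [eventually_exists_bestApprox hx (max Q 1)] with L ⟨m, hm, hQm, hmin, hbest⟩
  obtain ⟨δ, hδ, hsep⟩ := hbest.exists_separation (by omega)
  have hmL := (mem_Icc.1 hm).2
  have hm0 : (0 : ℝ) < m := by norm_cast; omega
  have hL0 : (0 : ℝ) < L := hm0.trans_le (Nat.cast_le.2 hmL)
  have hlog : Real.log (distZ (m * x))⁻¹ ≤ c * m := (div_le_iff₀ hm0).1 (hQ m (by omega))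
  have hsum := sum_neg_log_fract_le hx hmL hmin hδ hsep
  rw [one_div, inv_mul_le_iff₀ hL0]
  calc _ ≤ (1 + 4 * Real.log 2) * L + (L / m + 1) * (c * m) := by
        refine hsum.trans ?_
        gcongr
    _ = (1 + 4 * Real.log 2) * L + c * (L + m) := by field_simp
    _ ≤ L * (1 + 4 * Real.log 2 + 2 * c) := by nlinarith [Nat.cast_le (α := ℝ).2 hmL]

theorem Csup_le_add_two_mul_Bsup {x : ℝ} (hx : Irrational x) :
    Csup x ≤ ENNReal.ofReal (1 + 4 * Real.log 2) + 2 * Bsup x := by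
  rcases eq_or_ne (Bsup x) ⊤ with hB | hB
  · simp [hB]
  refine ENNReal.le_of_forall_pos_le_add fun ε hε _ => ?_
  set c := (Bsup x).toReal + ε / 2
  have hc0 : 0 < c := by positivity
  have hBc : Bsup x < ENNReal.ofReal c := by
    rw [← ENNReal.ofReal_toReal hB]
    exact ENNReal.ofReal_lt_ofReal_iff'.2 ⟨by simp [c, hε], hc0⟩
  have hc : ∀ᶠ q : ℕ in atTop, Real.log (distZ (q * x))⁻¹ / q ≤ c :=
    (eventually_lt_of_limsup_lt hBc).mono fun q hq => (ENNReal.ofReal_lt_ofReal_iff'.1 hq).1.le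
  calc Csup x ≤ ENNReal.ofReal (1 + 4 * Real.log 2 + 2 * c) :=
        limsup_le_of_le (by isBoundedDefault)
          ((eventually_mean_neg_log_fract_le hx hc0.le hc).mono fun L hL =>
            ENNReal.ofReal_le_ofReal hL)
    _ = ENNReal.ofReal (1 + 4 * Real.log 2) + 2 * Bsup x + ε := by
        rw [show 1 + 4 * Real.log 2 + 2 * c = (1 + 4 * Real.log 2) + 2 * (Bsup x).toReal + ε by
          ring, ENNReal.ofReal_add (by positivity) (by positivity),
          ENNReal.ofReal_add (by positivity) (by positivity), ENNReal.ofReal_mul (by norm_num),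
          ENNReal.ofReal_toReal hB, ENNReal.ofReal_coe_nnreal, ENNReal.ofReal_ofNat]

/-- For irrational `x`, `C_sup(x) ≤ 4 + 4 B_sup(x)`; in particular `C_sup(x)` is finite
whenever `B_sup(x)` is. -/
theorem stmt11 (x : ℝ) (hx : Irrational x) : Csup x ≤ 4 + 4 * Bsup x := by
  refine (Csup_le_add_two_mul_Bsup hx).trans (add_le_add ?_ (by gcongr; norm_num))
  rw [← ENNReal.ofReal_ofNat]
  exact ENNReal.ofReal_le_ofReal (by linarith [Real.log_two_lt_d9])
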